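/- Let A be a Young function and let p ∈ (0,∞). Then lim_{t→0+} t^{1/p} · A^{-1}(1/t) = 0 if and only if lim_{t→∞} A(t)/t^p = ∞, where A^{-1}(τ) = inf{σ ≥ 0 : A(σ) ≥ τ} is the left-continuous inverse of A. -/

import Mathlib

open MeasureTheory Filter Set ENNReal

noncomputable section

/-- A Young function: a convex, non-decreasing, left-continuous function
`A : [0,∞] → [0,∞]` with `A(0) = 0`, `A(0+) = 0` and `A(∞) = ∞`. -/
structure YoungFunction where
  toFun : ℝ≥0∞ → ℝ≥0∞
  map_zero : toFun 0 = 0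
  tendsto_zero : Filter.Tendsto toFun (nhdsWithin 0 (Set.Ioi 0)) (nhds 0)
  mono : Monotone toFun
  convex' : ∀ s t c : ℝ≥0∞, c ≤ 1 →
    toFun (c * s + (1 - c) * t) ≤ c * toFun s + (1 - c) * toFun t
  left_continuous : ∀ t : ℝ≥0∞, 0 < t → toFun t = ⨆ s ∈ Set.Iio t, toFun s
  map_top : toFun ⊤ = ⊤

/-- Left-continuous inverse of a non-decreasing function `F : [0,∞] → [0,∞]`:
`F⁻¹(t) = inf {τ ≥ 0 : F(τ) ≥ t}`. -/
def leftInvE (F : ℝ≥0∞ → ℝ≥0∞) (t : ℝ≥0∞) : ℝ≥0∞ :=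
  sInf {τ : ℝ≥0∞ | t ≤ F τ}

/-- `a` is the right-continuous derivative of the Young function `A`:
`a` is non-decreasing, right-continuous, `a(∞) = ∞`, and
`A(t) = ∫₀ᵗ a(s) ds` for all finite `t ≥ 0`. -/
def IsYoungDerivative (A : YoungFunction) (a : ℝ≥0∞ → ℝ≥0∞) : Prop :=
  Monotone a ∧ a ⊤ = ⊤ ∧
    (∀ t : ℝ≥0∞, t ≠ ⊤ → Filter.Tendsto a (nhdsWithin t (Set.Ioi t)) (nhds (a t))) ∧
    ∀ t : ℝ, 0 ≤ t →
      A.toFun (ENNReal.ofReal t) = ∫⁻ s in Set.Ioc (0:ℝ) t, a (ENNReal.ofReal s)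

/-- The Young conjugate `B̃(t) = sup {s·t − B(s) : s ∈ [0,∞]}`. -/
def youngConj (A : YoungFunction) (t : ℝ≥0∞) : ℝ≥0∞ :=
  ⨆ s : ℝ≥0∞, s * t - A.toFun s

variable {R : Type*} [MeasurableSpace R]

/-- The distribution function `f₊(λ) = μ({x : |f(x)| > λ})`. -/
def distFn (μ : Measure R) (f : R → ℝ) (lam : ℝ≥0∞) : ℝ≥0∞ :=
  μ {x | lam < ENNReal.ofReal |f x|}

/-- The non-increasing rearrangement `f*(t) = inf {λ ≥ 0 : f₊(λ) ≤ t}`. -/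
def rearr (μ : Measure R) (f : R → ℝ) (t : ℝ≥0∞) : ℝ≥0∞ :=
  sInf {lam : ℝ≥0∞ | distFn μ f lam ≤ t}

/-- The Lorentz functional `‖f‖_{p,q}` for `p, q ∈ (0,∞]`. -/
def lorentzNorm (μ : Measure R) (p q : ℝ≥0∞) (f : R → ℝ) : ℝ≥0∞ :=
  if q = ⊤ then
    ⨆ t : Set.Ioi (0:ℝ), ENNReal.ofReal t.1 ^ (p⁻¹).toReal * rearr μ f (ENNReal.ofReal t.1)
  else
    (∫⁻ t in Set.Ioi (0:ℝ),
        (ENNReal.ofReal t ^ (p⁻¹).toReal * rearr μ f (ENNReal.ofReal t)) ^ q.toReal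
          / ENNReal.ofReal t) ^ (q⁻¹).toReal

/-- The Luxemburg norm `‖f‖_A = inf {λ > 0 : ∫ A(|f|/λ) dμ ≤ 1}`. -/
def luxNorm (μ : Measure R) (A : YoungFunction) (f : R → ℝ) : ℝ≥0∞ :=
  sInf {lam : ℝ≥0∞ | 0 < lam ∧ ∫⁻ x, A.toFun (ENNReal.ofReal |f x| / lam) ∂μ ≤ 1}

/-- The measure `μ` is non-atomic: every set of positive measure has a subset
of strictly smaller positive measure. -/
def NonAtomic (μ : Measure R) : Prop :=
  ∀ s : Set R, MeasurableSet s → 0 < μ s →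
    ∃ t, t ⊆ s ∧ MeasurableSet t ∧ 0 < μ t ∧ μ t < μ s

/-- The almost-compact embedding `X ↪* Y`, for (quasi)norm functionals `NX`, `NY`:
`X ⊂ Y` and for every sequence of measurable sets `Eₙ` whose characteristic
functions tend to `0` a.e., `sup_{‖f‖_X ≤ 1} ‖f χ_{Eₙ}‖_Y → 0`. -/
def AlmostCompactEmbedding (μ : Measure R) (NX NY : (R → ℝ) → ℝ≥0∞) : Prop :=
  (∀ f : R → ℝ, Measurable f → NX f < ⊤ → NY f < ⊤) ∧
    ∀ E : ℕ → Set R, (∀ n, MeasurableSet (E n)) →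
      (∀ᵐ x ∂μ, Filter.Tendsto (fun n => (E n).indicator (fun _ => (1:ℝ)) x)
        Filter.atTop (nhds 0)) →
      Filter.Tendsto
        (fun n => ⨆ f : {f : R → ℝ // Measurable f ∧ NX f ≤ 1},
          NY ((E n).indicator f.1)) Filter.atTop (nhds 0)

/-- The continuous embedding `X ↪ Y`: there is `C > 0` with `‖f‖_Y ≤ C ‖f‖_X`. -/
def NormEmbedding (μ : Measure R) (NX NY : (R → ℝ) → ℝ≥0∞) : Prop :=
  ∃ C : ℝ, 0 < C ∧ ∀ f : R → ℝ, Measurable f → NY f ≤ ENNReal.ofReal C * NX f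

/-! The left-continuous inverse `F⁻¹` of a non-decreasing `F` satisfies `s ≤ F u → F⁻¹ s ≤ u`
and `F⁻¹ s < u → s ≤ F u`. Couple `t, u > 0` by `t ^ (1/p) * u = r`: then
`r ^ (-p) ≤ F u / u ^ p` is the same as `1/t ≤ F u`, so it forces `t ^ (1/p) * F⁻¹ (1/t) ≤ r`,
while `t ^ (1/p) * F⁻¹ (1/t) < r` forces it back. For fixed `r`, `t → 0+` exactly when
`u → ∞`, and letting `r → 0` turns these pointwise implications into the two limits. -/

open Topology

theorem leftInvE_le {F : ℝ≥0∞ → ℝ≥0∞} {s u : ℝ≥0∞} (h : s ≤ F u) : leftInvE F s ≤ u :=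
  sInf_le h

theorem le_of_leftInvE_lt {F : ℝ≥0∞ → ℝ≥0∞} (hF : Monotone F) {s u : ℝ≥0∞}
    (h : leftInvE F s < u) : s ≤ F u := by
  obtain ⟨τ, hτ, hτu⟩ := sInf_lt_iff.mp h
  exact hτ.trans (hF hτu.le)

section Rescaling

variable {p : ℝ} {t u r : ℝ≥0∞}

theorem inv_rpow_le_div_rpow_iff_inv_le (hp : 0 < p) (ht₀ : t ≠ 0) (ht : t ≠ ⊤) (hu₀ : u ≠ 0)
    (hu : u ≠ ⊤) (hr : t ^ (1 / p) * u = r) {x : ℝ≥0∞} :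
    r⁻¹ ^ p ≤ x / u ^ p ↔ t⁻¹ ≤ x := by
  have hup₀ : u ^ p ≠ 0 := (ENNReal.rpow_pos (pos_iff_ne_zero.2 hu₀) hu).ne'
  have hup : u ^ p ≠ ⊤ := ENNReal.rpow_ne_top_of_nonneg hp.le hu
  have hrp : r⁻¹ ^ p = t⁻¹ * (u ^ p)⁻¹ := by
    rw [← hr, ENNReal.inv_rpow, ENNReal.mul_rpow_of_nonneg _ _ hp.le, ← ENNReal.rpow_mul,
      one_div_mul_cancel hp.ne', ENNReal.rpow_one, ENNReal.mul_inv (.inl ht₀) (.inl ht)]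
  rw [hrp, div_eq_mul_inv, ENNReal.mul_le_mul_iff_left (ENNReal.inv_ne_zero.2 hup)
    (ENNReal.inv_ne_top.2 hup₀)]

variable {F : ℝ≥0∞ → ℝ≥0∞}

theorem rpow_mul_leftInvE_inv_le_of_inv_rpow_le (hp : 0 < p) (ht₀ : t ≠ 0) (ht : t ≠ ⊤)
    (hu₀ : u ≠ 0) (hu : u ≠ ⊤) (hr : t ^ (1 / p) * u = r) (h : r⁻¹ ^ p ≤ F u / u ^ p) :
    t ^ (1 / p) * leftInvE F t⁻¹ ≤ r := by
  rw [← hr]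
  gcongr
  exact leftInvE_le ((inv_rpow_le_div_rpow_iff_inv_le hp ht₀ ht hu₀ hu hr).1 h)

theorem inv_rpow_le_div_rpow_of_rpow_mul_leftInvE_lt (hF : Monotone F) (hp : 0 < p)
    (ht₀ : t ≠ 0) (ht : t ≠ ⊤) (hu₀ : u ≠ 0) (hu : u ≠ ⊤) (hr : t ^ (1 / p) * u = r)
    (h : t ^ (1 / p) * leftInvE F t⁻¹ < r) : r⁻¹ ^ p ≤ F u / u ^ p := by
  rw [inv_rpow_le_div_rpow_iff_inv_le hp ht₀ ht hu₀ hu hr]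
  rw [← hr, ENNReal.mul_lt_mul_iff_right (by simp [ht₀, hp.le]) (by simp [ht, hp.le])] at h
  exact le_of_leftInvE_lt hF h

end Rescaling

theorem ofReal_rpow_mul_ofReal {t u r q : ℝ} (ht : 0 ≤ t) (hq : 0 ≤ q) (h : t ^ q * u = r) :
    ENNReal.ofReal t ^ q * ENNReal.ofReal u = ENNReal.ofReal r := by
  rw [ENNReal.ofReal_rpow_of_nonneg ht hq, ← ENNReal.ofReal_mul (by positivity), h]

theorem tendsto_const_div_rpow_nhdsGT_zero {r q : ℝ} (hr : 0 < r) (hq : 0 < q) :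
    Tendsto (fun t : ℝ => r / t ^ q) (𝓝[>] 0) atTop := by
  refine ((tendsto_rpow_neg_nhdsGT_zero (neg_lt_zero.2 hq)).const_mul_atTop hr).congr' ?_
  filter_upwards [self_mem_nhdsWithin] with t ht
  rw [Real.rpow_neg (le_of_lt ht), div_eq_mul_inv]

theorem tendsto_const_div_rpow_atTop {r p : ℝ} (hr : 0 < r) (hp : 0 < p) :
    Tendsto (fun u : ℝ => (r / u) ^ p) atTop (𝓝[>] 0) := by
  refine tendsto_nhdsWithin_iff.2 ⟨?_, ?_⟩
  · simpa only [id_eq, Real.zero_rpow hp.ne'] using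
      (tendsto_const_nhds.div_atTop tendsto_id).rpow_const (.inr hp.le)
  · filter_upwards [eventually_gt_atTop 0] with u hu
    exact Real.rpow_pos_of_pos (div_pos hr hu) p

theorem tendsto_ofReal_inv_rpow_nhdsGT_zero {p : ℝ} (hp : 0 < p) :
    Tendsto (fun r : ℝ => (ENNReal.ofReal r)⁻¹ ^ p) (𝓝[>] 0) (𝓝 ⊤) := by
  have h : Tendsto (fun r : ℝ => (ENNReal.ofReal r)⁻¹) (𝓝[>] 0) (𝓝 ⊤) := by
    rw [← ENNReal.inv_zero, tendsto_inv_iff, ← ENNReal.ofReal_zero]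
    exact (ENNReal.continuous_ofReal.tendsto 0).mono_left nhdsWithin_le_nhds
  rw [← ENNReal.top_rpow_of_pos hp]
  exact ((ENNReal.continuous_rpow_const (y := p)).tendsto ⊤).comp h

section Directions

variable {F : ℝ≥0∞ → ℝ≥0∞} {p : ℝ}

theorem tendsto_div_rpow_atTop_of_tendsto_rpow_mul_leftInvE (hF : Monotone F) (hp : 0 < p)
    (h : Tendsto (fun t : ℝ => ENNReal.ofReal t ^ (1 / p) * leftInvE F (ENNReal.ofReal t)⁻¹)
      (𝓝[>] 0) (𝓝 0)) :
    Tendsto (fun u : ℝ => F (ENNReal.ofReal u) / ENNReal.ofReal u ^ p) atTop (𝓝 ⊤) := by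
  refine ENNReal.tendsto_nhds_top_iff_nnreal.2 fun N => ?_
  obtain ⟨r, hN, hr⟩ := (((tendsto_ofReal_inv_rpow_nhdsGT_zero hp).eventually
    (eventually_gt_nhds ENNReal.coe_lt_top)).and self_mem_nhdsWithin).exists
  have hsmall := (tendsto_const_div_rpow_atTop hr hp).eventually
    (h.eventually (gt_mem_nhds (ENNReal.ofReal_pos.2 hr)))
  filter_upwards [hsmall, eventually_gt_atTop 0] with u hu hu₀
  have hrel : ((r / u) ^ p) ^ (1 / p) * u = r := by
    rw [← Real.rpow_mul (div_pos hr hu₀).le, mul_one_div_cancel hp.ne', Real.rpow_one,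
      div_mul_cancel₀ r hu₀.ne']
  exact hN.trans_le <| inv_rpow_le_div_rpow_of_rpow_mul_leftInvE_lt hF hp (by positivity)
    ENNReal.ofReal_ne_top (by positivity) ENNReal.ofReal_ne_top
    (ofReal_rpow_mul_ofReal (by positivity) (by positivity) hrel) hu

theorem tendsto_rpow_mul_leftInvE_of_tendsto_div_rpow_atTop (hp : 0 < p)
    (h : Tendsto (fun u : ℝ => F (ENNReal.ofReal u) / ENNReal.ofReal u ^ p) atTop (𝓝 ⊤)) :
    Tendsto (fun t : ℝ => ENNReal.ofReal t ^ (1 / p) * leftInvE F (ENNReal.ofReal t)⁻¹)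
      (𝓝[>] 0) (𝓝 0) := by
  refine ENNReal.tendsto_nhds_zero.2 fun ε hε => ?_
  obtain ⟨r, -, hr, hrε⟩ := ENNReal.lt_iff_exists_real_btwn.1 hε
  have hr₀ : 0 < r := ENNReal.ofReal_pos.1 hr
  have hlarge := (tendsto_const_div_rpow_nhdsGT_zero hr₀ (one_div_pos.2 hp)).eventually
    (h.eventually (eventually_ge_nhds (ENNReal.rpow_lt_top_of_nonneg hp.le
      (ENNReal.inv_ne_top.2 hr.ne'))))
  filter_upwards [hlarge, self_mem_nhdsWithin] with t ht (ht₀ : 0 < t)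
  have hrel : t ^ (1 / p) * (r / t ^ (1 / p)) = r :=
    mul_div_cancel₀ r (Real.rpow_pos_of_pos ht₀ _).ne'
  exact (rpow_mul_leftInvE_inv_le_of_inv_rpow_le hp (by positivity) ENNReal.ofReal_ne_top
    (by positivity) ENNReal.ofReal_ne_top
    (ofReal_rpow_mul_ofReal ht₀.le (by positivity) hrel) ht).trans hrε.le

end Directions

/-- For a Young function `A` and `p ∈ (0,∞)`:
`lim_{t→0+} t^{1/p} A⁻¹(1/t) = 0` iff `lim_{t→∞} A(t)/t^p = ∞`,
where `A⁻¹` is the left-continuous inverse of `A`. -/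
theorem tendsto_inv_rearrangement_iff
    (A : YoungFunction) (p : ℝ) (hp : 0 < p) :
    Filter.Tendsto
        (fun t : ℝ => ENNReal.ofReal t ^ (1 / p) * leftInvE A.toFun (ENNReal.ofReal t)⁻¹)
        (nhdsWithin 0 (Set.Ioi 0)) (nhds 0) ↔
      Filter.Tendsto (fun t : ℝ => A.toFun (ENNReal.ofReal t) / ENNReal.ofReal t ^ p)
        Filter.atTop (nhds ⊤) :=
  ⟨tendsto_div_rpow_atTop_of_tendsto_rpow_mul_leftInvE A.mono hp,
    tendsto_rpow_mul_leftInvE_of_tendsto_div_rpow_atTop hp⟩
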